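/- Equivalence of positivity: Let μ be a measure preserved by a measurable bijection θ and B ∈ 𝒜. Then the following are equivalent: (a) μ(B) > 0; (b) μ({T_B < ∞}) > 0; (c) μ({T̃_B < ∞}) > 0. -/

import Mathlib

open MeasureTheory
open scoped ENNReal Classical
noncomputable section

/-- First hitting time `inf {n ≥ 1 : θ^n ω ∈ B}` valued in `ℕ∞` (`⊤` if never). -/
def hitT {Ω : Type*} (θ : Ω → Ω) (B : Set Ω) (ω : Ω) : ℕ∞ :=
  ⨅ (n : ℕ) (_ : 0 < n ∧ θ^[n] ω ∈ B), (n : ℕ∞)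

/-- Number of visits to `A` strictly before the hitting time of `B` (in `[0,∞]`). -/
def countM {Ω : Type*} (θ : Ω → Ω) (B A : Set Ω) (ω : Ω) : ℝ≥0∞ :=
  ∑' n : ℕ, if (n : ℕ∞) < hitT θ B ω ∧ θ^[n] ω ∈ A then 1 else 0

/-!
The event `{T_B < ∞}` is the countable union of the preimages `θ^{-(n+1)} B`, and each of
them has measure `μ B` by invariance. So `μ {T_B < ∞} = 0` iff `μ B = 0`. The backward
hitting time is the forward one for `θ⁻¹`, which preserves `μ` as well.
-/

lemma hitT_lt_top_iff {Ω : Type*} (f : Ω → Ω) (B : Set Ω) (ω : Ω) :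
    hitT f B ω < ⊤ ↔ ∃ n : ℕ, 0 < n ∧ f^[n] ω ∈ B := by
  simp only [hitT, iInf_lt_iff, ENat.natCast_lt_top, exists_prop, and_true]

lemma setOf_hitT_lt_top_eq_iUnion {Ω : Type*} (f : Ω → Ω) (B : Set Ω) :
    {ω | hitT f B ω < ⊤} = ⋃ n : ℕ, f^[n + 1] ⁻¹' B := by
  ext ω
  simp only [Set.mem_ofPred_eq, hitT_lt_top_iff, Set.mem_iUnion, Set.mem_preimage]
  constructor
  · rintro ⟨n, hn, hmem⟩
    exact ⟨n - 1, by rwa [Nat.sub_add_cancel hn]⟩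
  · rintro ⟨n, hmem⟩
    exact ⟨n + 1, n.succ_pos, hmem⟩

lemma MeasureTheory.MeasurePreserving.measure_pos_iff_measure_setOf_hitT_lt_top_pos
    {Ω : Type*} [MeasurableSpace Ω] {f : Ω → Ω} {μ : Measure Ω}
    (hf : MeasurePreserving f μ μ) {B : Set Ω} (hB : MeasurableSet B) :
    0 < μ B ↔ 0 < μ {ω | hitT f B ω < ⊤} := by
  have hiter (n : ℕ) : μ (f^[n + 1] ⁻¹' B) = μ B :=
    (hf.iterate (n + 1)).measure_preimage hB.nullMeasurableSet
  simp only [pos_iff_ne_zero, ne_eq, setOf_hitT_lt_top_eq_iUnion, measure_iUnion_null_iff, hiter,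
    forall_const]

/-- Equivalence of positivity: `μ(B) > 0 ↔ μ(T_B < ∞) > 0 ↔ μ(T̃_B < ∞) > 0`. -/
theorem positivity_equivalence {Ω : Type*} [MeasurableSpace Ω]
    (θ : Ω ≃ Ω) (hθ : Measurable θ) (hθ' : Measurable θ.symm)
    (μ : Measure Ω) (hinv : ∀ A : Set Ω, MeasurableSet A → μ (⇑θ ⁻¹' A) = μ A)
    (B : Set Ω) (hB : MeasurableSet B) :
    (0 < μ B ↔ 0 < μ {ω | hitT (⇑θ) B ω < ⊤}) ∧
    (0 < μ B ↔ 0 < μ {ω | hitT (⇑θ.symm) B ω < ⊤}) := by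
  have hθμ : MeasurePreserving θ μ μ :=
    ⟨hθ, Measure.ext fun A hA => by rw [Measure.map_apply hθ hA, hinv A hA]⟩
  have hθμ_symm : MeasurePreserving θ.symm μ μ :=
    MeasurePreserving.symm ⟨θ, hθ, hθ'⟩ hθμ
  exact ⟨hθμ.measure_pos_iff_measure_setOf_hitT_lt_top_pos hB,
    hθμ_symm.measure_pos_iff_measure_setOf_hitT_lt_top_pos hB⟩
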